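/- arXiv:1603.06658 — 8 statements merged into one kernel-verified Lean document; each statement's English description precedes it below -/
import Mathlib

section
/- For every n ≥ 1 there exist linear functionals u_1,…,u_{2n−1} : ℂ^{2n−1} → ℂ, linear functionals ψ_1,…,ψ_{2n−1} : ℂⁿ → ℂ, and vectors w_1,…,w_{2n−1} ∈ ℂⁿ such that for every a ∈ ℂ^{2n−1} and every v ∈ ℂⁿ, the Toeplitz matrix A represented by a satisfies A·v = Σ_{j=1}^{2n−1} u_j(a)·ψ_j(v)·w_j. That is, the n×n Toeplitz matrix-vector product admits a bilinear algorithm of length 2n−1. -/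
/-!
With 0-based indices, entry `i` of `A v` collects the products `a_m v_j` with
`m - j + i - (n - 1) = 0`. For these index ranges that integer lies strictly between `-N` and `N`,
where `N = 2n - 1`, so the equation may be replaced by a congruence mod `N`: `A v` is a window of a
cyclic convolution of length `N` that no wrap-around term reaches. The discrete Fourier transform
at a primitive `N`-th root of unity `ω` diagonalises cyclic convolution, at the cost of the `N`
products `(∑ₘ a_m ω^{km}) · (∑ⱼ v_j ω^{-kj})`, `k < N`.
-/

open Finset

/-- The `n × n` Toeplitz matrix represented by `a ∈ ℂ^(2n-1)`:
in 1-based indexing `A i j = a (j - i + n)`. -/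
def toeplitzMat (n : ℕ) (a : Fin (2 * n - 1) → ℂ) : Matrix (Fin n) (Fin n) ℂ :=
  Matrix.of fun i j =>
    a ⟨j.val + (n - 1) - i.val, by have hi := i.isLt; have hj := j.isLt; omega⟩

theorem IsPrimitiveRoot.sum_zpow_mul_eq_ite {K : Type*} [Field K] {ω : K} {N : ℕ}
    (hω : IsPrimitiveRoot ω N) (t : ℤ) :
    ∑ k : Fin N, ω ^ ((k : ℤ) * t) = if (N : ℤ) ∣ t then (N : K) else 0 := by
  have hpow : ∀ k : Fin N, ω ^ ((k : ℤ) * t) = (ω ^ t) ^ (k : ℕ) := fun k => by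
    rw [mul_comm, zpow_mul, zpow_natCast]
  simp_rw [hpow]
  rw [Fin.sum_univ_eq_sum_range (fun k => (ω ^ t) ^ k)]
  split_ifs with hdvd
  · simp [(hω.zpow_eq_one_iff_dvd t).mpr hdvd]
  · have hne : ω ^ t ≠ 1 := mt (hω.zpow_eq_one_iff_dvd t).mp hdvd
    have hN : (ω ^ t) ^ N = 1 := by rw [← zpow_natCast, ← zpow_mul, mul_comm, zpow_mul,
      zpow_natCast, hω.pow_eq_one, one_zpow]
    rw [geom_sum_eq hne, hN, sub_self, zero_div]

theorem natCast_dvd_toeplitz_offset_iff {n : ℕ} (m : Fin (2 * n - 1)) (i j : Fin n) :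
    ((2 * n - 1 : ℕ) : ℤ) ∣ m - j + i - (n - 1) ↔
      m = ⟨j + (n - 1) - i, by have := i.isLt; have := j.isLt; omega⟩ := by
  have := m.isLt; have := i.isLt; have := j.isLt
  simp only [Fin.ext_iff]
  constructor
  · intro hdvd
    have := Int.eq_zero_of_abs_lt_dvd hdvd (abs_lt.mpr ⟨by omega, by omega⟩)
    omega
  · intro hm
    exact ⟨0, by omega⟩

theorem toeplitzMat_mulVec_eq_sum_dft {n : ℕ} {ω : ℂ} (hω : IsPrimitiveRoot ω (2 * n - 1))
    (a : Fin (2 * n - 1) → ℂ) (v : Fin n → ℂ) (i : Fin n) :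
    (toeplitzMat n a).mulVec v i =
      ∑ k : Fin (2 * n - 1),
        (∑ m, a m * ω ^ ((k : ℤ) * m)) * (∑ j, v j * ω ^ (-((k : ℤ) * j))) *
          (((2 * n - 1 : ℕ) : ℂ)⁻¹ * ω ^ ((k : ℤ) * (i - (n - 1)))) := by
  have hω0 : ω ≠ 0 := hω.ne_zero (by have := i.isLt; omega)
  have hN : ((2 * n - 1 : ℕ) : ℂ) ≠ 0 := Nat.cast_ne_zero.mpr (by have := i.isLt; omega)
  have hexpand : ∀ k : Fin (2 * n - 1),
      (∑ m, a m * ω ^ ((k : ℤ) * m)) * (∑ j, v j * ω ^ (-((k : ℤ) * j))) *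
        (((2 * n - 1 : ℕ) : ℂ)⁻¹ * ω ^ ((k : ℤ) * (i - (n - 1)))) =
      ∑ j, ∑ m, a m * v j *
        (((2 * n - 1 : ℕ) : ℂ)⁻¹ * ω ^ ((k : ℤ) * (m - j + i - (n - 1)))) := by
    intro k
    rw [sum_mul_sum, sum_comm, sum_mul]
    refine sum_congr rfl fun j _ => ?_
    rw [sum_mul]
    refine sum_congr rfl fun m _ => ?_
    have hexp : (k : ℤ) * (m - j + i - (n - 1)) = k * m + -(k * j) + k * (i - (n - 1)) := by ring
    rw [hexp, zpow_add₀ hω0, zpow_add₀ hω0]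
    ring
  rw [sum_congr rfl fun k _ => hexpand k, sum_comm]
  simp only [Matrix.mulVec, dotProduct, toeplitzMat, Matrix.of_apply]
  refine sum_congr rfl fun j _ => ?_
  rw [sum_comm]
  simp_rw [← mul_sum, hω.sum_zpow_mul_eq_ite, natCast_dvd_toeplitz_offset_iff, mul_ite, mul_zero,
    inv_mul_cancel₀ hN, mul_one, sum_ite_eq', if_pos (mem_univ _)]

/-- the `n × n` Toeplitz matrix-vector product admits a bilinear
algorithm of length `2n - 1`. -/
theorem toeplitz_bilinear_algorithm_length (n : ℕ) (hn : 1 ≤ n) :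
    ∃ u : Fin (2 * n - 1) → (Fin (2 * n - 1) → ℂ) →ₗ[ℂ] ℂ,
    ∃ ψ : Fin (2 * n - 1) → (Fin n → ℂ) →ₗ[ℂ] ℂ,
    ∃ w : Fin (2 * n - 1) → Fin n → ℂ,
      ∀ (a : Fin (2 * n - 1) → ℂ) (v : Fin n → ℂ),
        (toeplitzMat n a).mulVec v = ∑ j : Fin (2 * n - 1), (u j a * ψ j v) • w j := by
  obtain ⟨ω, hω⟩ : ∃ ω : ℂ, IsPrimitiveRoot ω (2 * n - 1) :=
    ⟨_, Complex.isPrimitiveRoot_exp _ (by omega)⟩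
  refine ⟨fun k => Fintype.linearCombination ℂ fun m => ω ^ ((k : ℤ) * m),
    fun k => Fintype.linearCombination ℂ fun j => ω ^ (-((k : ℤ) * j)),
    fun k i => ((2 * n - 1 : ℕ) : ℂ)⁻¹ * ω ^ ((k : ℤ) * (i - (n - 1))), fun a v => ?_⟩
  ext i
  simp [Fintype.linearCombination_apply, toeplitzMat_mulVec_eq_sum_dft hω]
end

section
/- For every n ≥ 1, every bilinear algorithm for the n×n Toeplitz matrix-vector product has length at least 2n−1: if u_1,…,u_r : ℂ^{2n−1} → ℂ and ψ_1,…,ψ_r : ℂⁿ → ℂ are linear functionals and w_1,…,w_r ∈ ℂⁿ are vectors such that for every a ∈ ℂ^{2n−1} and v ∈ ℂⁿ the Toeplitz matrix A represented by a satisfies A·v = Σ_{j=1}^{r} u_j(a)·ψ_j(v)·w_j, then r ≥ 2n−1. Hence the bilinear complexity of the Toeplitz matrix-vector product is exactly 2n−1. -/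
open Matrix Module

theorem finrank_le_of_injective_of_mem_span {K V W : Type*} [DivisionRing K] [AddCommGroup V]
    [Module K V] [AddCommGroup W] [Module K W] {r : ℕ} (f : V →ₗ[K] W)
    (hf : Function.Injective f) (m : Fin r → W)
    (hm : ∀ x, f x ∈ Submodule.span K (Set.range m)) :
    finrank K V ≤ r :=
  calc finrank K V = finrank K (LinearMap.range f) := (LinearMap.finrank_range_of_inj hf).symm
    _ ≤ finrank K (Submodule.span K (Set.range m)) :=
        have := FiniteDimensional.span_of_finite K (Set.finite_range m)
        Submodule.finrank_mono (by rintro _ ⟨x, rfl⟩; exact hm x)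
    _ ≤ r := (finrank_range_le_card (R := K) m).trans_eq (Fintype.card_fin r)

theorem Matrix.eq_sum_vecMulVec_of_mulVec_eq {K m n ι : Type*} [CommSemiring K] [Fintype n]
    [DecidableEq n] [Fintype ι] (A : Matrix m n K) (c : ι → K) (ψ : ι → (n → K) →ₗ[K] K)
    (w : ι → m → K) (h : ∀ v, A *ᵥ v = ∑ j, (c j * ψ j v) • w j) :
    A = ∑ j, c j • vecMulVec (w j) fun k => ψ j (Pi.single k 1) := by
  ext i k
  have hcol := congrFun (h (Pi.single k 1)) i
  rw [mulVec_single_one] at hcol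
  simp only [col_apply, Finset.sum_apply, Pi.smul_apply, smul_eq_mul] at hcol
  simp only [hcol, sum_apply, smul_apply, vecMulVec_apply, smul_eq_mul]
  exact Finset.sum_congr rfl fun j _ => by ring

def toeplitzLin (n : ℕ) : (Fin (2 * n - 1) → ℂ) →ₗ[ℂ] Matrix (Fin n) (Fin n) ℂ where
  toFun := toeplitzMat n
  map_add' _ _ := by ext; simp [toeplitzMat]
  map_smul' _ _ := by ext; simp [toeplitzMat]

theorem toeplitzMat_injective (n : ℕ) : Function.Injective (toeplitzMat n) := by
  intro a b hab
  funext m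
  -- Parameter `m` sits in row `n - 1 - m`, column `m - (n - 1)` (truncated subtraction).
  have hentry := congrFun (congrFun hab ⟨n - 1 - m, by omega⟩) ⟨m - (n - 1), by omega⟩
  simp only [toeplitzMat, of_apply] at hentry
  convert hentry using 2 <;> ext <;> simp only <;> omega

theorem toeplitz_bilinear_algorithm_lower_bound_general (n : ℕ) (r : ℕ)
    (u : Fin r → (Fin (2 * n - 1) → ℂ) →ₗ[ℂ] ℂ)
    (ψ : Fin r → (Fin n → ℂ) →ₗ[ℂ] ℂ)
    (w : Fin r → Fin n → ℂ)
    (h : ∀ (a : Fin (2 * n - 1) → ℂ) (v : Fin n → ℂ),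
      (toeplitzMat n a).mulVec v = ∑ j : Fin r, (u j a * ψ j v) • w j) :
    2 * n - 1 ≤ r := by
  have hspan : ∀ a, toeplitzLin n a ∈
      Submodule.span ℂ (Set.range fun j => vecMulVec (w j) fun k => ψ j (Pi.single k 1)) := by
    intro a
    rw [Submodule.mem_span_range_iff_exists_fun]
    exact ⟨fun j => u j a, (eq_sum_vecMulVec_of_mulVec_eq _ _ ψ w (h a)).symm⟩
  simpa using finrank_le_of_injective_of_mem_span _ (toeplitzMat_injective n) _ hspan

/-- every bilinear algorithm for the `n × n` Toeplitz matrix-vector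
product has length at least `2n - 1`; hence the bilinear complexity is exactly `2n - 1`. -/
theorem toeplitz_bilinear_algorithm_lower_bound (n : ℕ) (hn : 1 ≤ n) (r : ℕ)
    (u : Fin r → (Fin (2 * n - 1) → ℂ) →ₗ[ℂ] ℂ)
    (ψ : Fin r → (Fin n → ℂ) →ₗ[ℂ] ℂ)
    (w : Fin r → Fin n → ℂ)
    (h : ∀ (a : Fin (2 * n - 1) → ℂ) (v : Fin n → ℂ),
      (toeplitzMat n a).mulVec v = ∑ j : Fin r, (u j a * ψ j v) • w j) :
    2 * n - 1 ≤ r :=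
  toeplitz_bilinear_algorithm_lower_bound_general n r u ψ w h
end

section
/- For every n ≥ 1 there exist linear functionals u_1,…,u_{2n−1} : ℂ^{2n−1} → ℂ, linear functionals ψ_1,…,ψ_{2n−1} : ℂⁿ → ℂ, and vectors w_1,…,w_{2n−1} ∈ ℂⁿ such that for every h ∈ ℂ^{2n−1} and every v ∈ ℂⁿ, the Hankel matrix H represented by h satisfies H·v = Σ_{j=1}^{2n−1} u_j(h)·ψ_j(v)·w_j. That is, the n×n Hankel matrix-vector product admits a bilinear algorithm of length 2n−1. -/
/-! With `N = 2n - 1` distinct nodes `x j`, every `h ∈ ℂ^N` is a moment sequence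
`h m = ∑ j, c j * x j ^ m` (`m < N`), the weights `c = h ᵥ* V⁻¹` being obtained by inverting the
Vandermonde matrix `V` of the nodes. For such `h` the Hankel matrix factors as `Wᵀ * diagonal c * W`
with `W j i = x j ^ (n - 1 - i)`, and evaluating this product on `v` costs one multiplication
`c j * (W *ᵥ v) j` per node. -/

/-- The `n × n` Hankel matrix represented by `h ∈ ℂ^(2n-1)`:
in 1-based indexing `H i j = h (2n + 1 - i - j)`, i.e. in 0-based indexing
`H i j = h (2n - 2 - i - j)`. -/
def hankelMat (n : ℕ) (h : Fin (2 * n - 1) → ℂ) : Matrix (Fin n) (Fin n) ℂ :=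
  Matrix.of fun i j =>
    h ⟨2 * n - 2 - i.val - j.val, by have hi := i.isLt; have hj := j.isLt; omega⟩

open Matrix

theorem Matrix.vecMul_inv_vandermonde_vecMul {K : Type*} [Field K] {N : ℕ} {x : Fin N → K}
    (hx : Function.Injective x) (h : Fin N → K) :
    (h ᵥ* (vandermonde x)⁻¹) ᵥ* vandermonde x = h := by
  have hV : IsUnit (vandermonde x).det :=
    (det_vandermonde_ne_zero_iff.mpr hx).isUnit
  rw [vecMul_vecMul, nonsing_inv_mul _ hV, vecMul_one]

theorem Matrix.transpose_mul_diagonal_mul_apply {ι κ R : Type*} [Fintype ι] [DecidableEq ι]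
    [CommSemiring R] (A : Matrix ι κ R) (c : ι → R) (i k : κ) :
    (Aᵀ * diagonal c * A) i k = ∑ j, c j * A j i * A j k := by
  rw [mul_apply]
  simp only [mul_diagonal, transpose_apply]
  exact Finset.sum_congr rfl fun j _ => by ring

theorem Matrix.transpose_mul_diagonal_mul_mulVec {ι κ R : Type*} [Fintype ι] [Fintype κ]
    [DecidableEq ι] [CommSemiring R] (A : Matrix ι κ R) (c : ι → R) (v : κ → R) :
    (Aᵀ * diagonal c * A) *ᵥ v = ∑ j, (c j * (A *ᵥ v) j) • A j := by
  ext i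
  simp only [mulVec, dotProduct, transpose_mul_diagonal_mul_apply, Finset.sum_apply,
    Pi.smul_apply, smul_eq_mul, Finset.sum_mul, Finset.mul_sum]
  rw [Finset.sum_comm]
  exact Finset.sum_congr rfl fun j _ => Finset.sum_congr rfl fun k _ => by ring

/-- Reversing the columns turns the Hankel index `2n - 2 - i - k` into the exponent sum
`(n - 1 - i) + (n - 1 - k)`. -/
def revPowMatrix {ι R : Type*} [Monoid R] (n : ℕ) (x : ι → R) : Matrix ι (Fin n) R :=
  of fun j i => x j ^ (n - 1 - (i : ℕ))

theorem hankelMat_eq_transpose_mul_diagonal_mul {ι : Type*} [Fintype ι] [DecidableEq ι] {n : ℕ}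
    (x c : ι → ℂ) (h : Fin (2 * n - 1) → ℂ)
    (hc : ∀ m : Fin (2 * n - 1), ∑ j, c j * x j ^ (m : ℕ) = h m) :
    hankelMat n h = (revPowMatrix n x)ᵀ * diagonal c * revPowMatrix n x := by
  ext i k
  rw [transpose_mul_diagonal_mul_apply, hankelMat, of_apply, ← hc]
  refine Finset.sum_congr rfl fun j _ => ?_
  rw [revPowMatrix, of_apply, of_apply, mul_assoc, ← pow_add]
  congr 2
  simp only
  omega

theorem hankel_bilinear_algorithm_length_general (n : ℕ) :
    ∃ u : Fin (2 * n - 1) → (Fin (2 * n - 1) → ℂ) →ₗ[ℂ] ℂ,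
    ∃ ψ : Fin (2 * n - 1) → (Fin n → ℂ) →ₗ[ℂ] ℂ,
    ∃ w : Fin (2 * n - 1) → Fin n → ℂ,
      ∀ (h : Fin (2 * n - 1) → ℂ) (v : Fin n → ℂ),
        (hankelMat n h).mulVec v = ∑ j : Fin (2 * n - 1), (u j h * ψ j v) • w j := by
  let x : Fin (2 * n - 1) → ℂ := fun j => (j : ℕ)
  have hx : Function.Injective x := Nat.cast_injective.comp Fin.val_injective
  let W := revPowMatrix n x
  refine ⟨fun j => (LinearMap.proj j).comp (vecMulLinear (vandermonde x)⁻¹),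
    fun j => (LinearMap.proj j).comp (mulVecLin W), W, fun h v => ?_⟩
  have hc (m : Fin (2 * n - 1)) : ∑ j, (h ᵥ* (vandermonde x)⁻¹) j * x j ^ (m : ℕ) = h m :=
    congrFun (vecMul_inv_vandermonde_vecMul hx h) m
  rw [hankelMat_eq_transpose_mul_diagonal_mul x _ h hc, transpose_mul_diagonal_mul_mulVec]
  rfl

/-- the `n × n` Hankel matrix-vector product admits a bilinear
algorithm of length `2n - 1`. -/
theorem hankel_bilinear_algorithm_length (n : ℕ) (hn : 1 ≤ n) :
    ∃ u : Fin (2 * n - 1) → (Fin (2 * n - 1) → ℂ) →ₗ[ℂ] ℂ,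
    ∃ ψ : Fin (2 * n - 1) → (Fin n → ℂ) →ₗ[ℂ] ℂ,
    ∃ w : Fin (2 * n - 1) → Fin n → ℂ,
      ∀ (h : Fin (2 * n - 1) → ℂ) (v : Fin n → ℂ),
        (hankelMat n h).mulVec v = ∑ j : Fin (2 * n - 1), (u j h * ψ j v) • w j :=
  hankel_bilinear_algorithm_length_general n
end

section
/- For every n ≥ 1, every bilinear algorithm for the n×n Hankel matrix-vector product has length at least 2n−1: if u_1,…,u_r : ℂ^{2n−1} → ℂ and ψ_1,…,ψ_r : ℂⁿ → ℂ are linear functionals and w_1,…,w_r ∈ ℂⁿ are vectors such that for every h ∈ ℂ^{2n−1} and v ∈ ℂⁿ the Hankel matrix H represented by h satisfies H·v = Σ_{j=1}^{r} u_j(h)·ψ_j(v)·w_j, then r ≥ 2n−1. Hence the bilinear complexity of the Hankel matrix-vector product is exactly 2n−1. -/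
/-!
The Hankel matrices form a subspace of dimension `2n - 1` of the `n × n` matrices, since the
parameter vector can be read off the last row and the first column. Feeding the basis vectors
`e_k` to a bilinear algorithm of length `r` writes every Hankel matrix `H` as
`∑ j, u_j(h) • w_j ψ_jᵀ`, a combination of `r` fixed rank-one matrices, so that subspace lies
in a span of `r` vectors and `2n - 1 ≤ r`.
-/

open Module Submodule

theorem Module.finrank_le_card_of_injective_of_forall_mem_span {K V W ι : Type*} [DivisionRing K]
    [AddCommGroup V] [Module K V] [AddCommGroup W] [Module K W] [Fintype ι]
    (Φ : V →ₗ[K] W) (hΦ : Function.Injective Φ) (A : ι → W)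
    (hA : ∀ x, Φ x ∈ span K (Set.range A)) :
    finrank K V ≤ Fintype.card ι :=
  have := FiniteDimensional.span_of_finite K (Set.finite_range A)
  calc finrank K V ≤ finrank K (span K (Set.range A)) :=
        LinearMap.finrank_le_finrank_of_injective (f := Φ.codRestrict _ hA)
          fun _ _ hxy ↦ hΦ (congrArg Subtype.val hxy)
    _ ≤ Fintype.card ι := finrank_range_le_card A

theorem Matrix.eq_sum_smul_vecMulVec_of_mulVec_eq {m n ι R : Type*} [CommSemiring R]
    [Fintype n] [DecidableEq n] [Fintype ι] (M : Matrix m n R) (c : ι → R)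
    (ψ : ι → (n → R) → R) (w : ι → m → R)
    (hM : ∀ v, M.mulVec v = ∑ j, (c j * ψ j v) • w j) :
    M = ∑ j, c j • vecMulVec (w j) fun k ↦ ψ j (Pi.single k 1) := by
  ext i k
  have hk := congrFun (hM (Pi.single k 1)) i
  rw [mulVec_single_one, col_apply] at hk
  simp only [hk, Finset.sum_apply, Matrix.sum_apply, Pi.smul_apply, smul_apply, vecMulVec_apply,
    smul_eq_mul]
  exact Finset.sum_congr rfl fun j _ ↦ by ring

def hankelLinearMap (n : ℕ) : (Fin (2 * n - 1) → ℂ) →ₗ[ℂ] Matrix (Fin n) (Fin n) ℂ where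
  toFun := hankelMat n
  map_add' _ _ := rfl
  map_smul' _ _ := rfl

theorem hankelMat_injective (n : ℕ) : Function.Injective (hankelMat n) := by
  intro a b hab
  funext t
  have ht := t.isLt
  -- the antidiagonal of index `t` meets the last row or, failing that, the first column
  let i : Fin n := ⟨min (n - 1) (2 * n - 2 - t.val), by omega⟩
  let j : Fin n := ⟨2 * n - 2 - t.val - i.val, by simp only [i]; omega⟩
  have hij := congrFun (congrFun hab i) j
  simp only [hankelMat, Matrix.of_apply] at hij
  convert hij using 2 <;> ext <;> simp only [i, j] <;> omega

theorem hankel_bilinear_algorithm_lower_bound_general (n : ℕ) (r : ℕ)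
    (u : Fin r → (Fin (2 * n - 1) → ℂ) →ₗ[ℂ] ℂ)
    (ψ : Fin r → (Fin n → ℂ) →ₗ[ℂ] ℂ)
    (w : Fin r → Fin n → ℂ)
    (h : ∀ (h' : Fin (2 * n - 1) → ℂ) (v : Fin n → ℂ),
      (hankelMat n h').mulVec v = ∑ j : Fin r, (u j h' * ψ j v) • w j) :
    2 * n - 1 ≤ r := by
  classical
  let A j := Matrix.vecMulVec (w j) fun k ↦ ψ j (Pi.single k 1)
  have hspan : ∀ h', hankelLinearMap n h' ∈ span ℂ (Set.range A) := fun h' ↦ by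
    change hankelMat n h' ∈ _
    rw [Matrix.eq_sum_smul_vecMulVec_of_mulVec_eq _ (fun j ↦ u j h') (fun j ↦ ψ j) w (h h')]
    exact sum_mem fun j _ ↦ smul_mem _ _ (subset_span ⟨j, rfl⟩)
  simpa using finrank_le_card_of_injective_of_forall_mem_span (hankelLinearMap n)
    (hankelMat_injective n) A hspan

/-- every bilinear algorithm for the `n × n` Hankel matrix-vector
product has length at least `2n - 1`; hence the bilinear complexity is exactly `2n - 1`. -/
theorem hankel_bilinear_algorithm_lower_bound (n : ℕ) (hn : 1 ≤ n) (r : ℕ)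
    (u : Fin r → (Fin (2 * n - 1) → ℂ) →ₗ[ℂ] ℂ)
    (ψ : Fin r → (Fin n → ℂ) →ₗ[ℂ] ℂ)
    (w : Fin r → Fin n → ℂ)
    (h : ∀ (h' : Fin (2 * n - 1) → ℂ) (v : Fin n → ℂ),
      (hankelMat n h').mulVec v = ∑ j : Fin r, (u j h' * ψ j v) • w j) :
    2 * n - 1 ≤ r :=
  hankel_bilinear_algorithm_lower_bound_general n r u ψ w h
end

section
/- Let n ≥ 1 and let m = ⌈n/2⌉. Every symmetric n×n complex matrix S can be written as S = Σ_{k=1}^{m} S_k, where for each k the matrix S_k satisfies: (S_k)_{ij} = 0 unless k ≤ i ≤ n+1−k and k ≤ j ≤ n+1−k, and on the central block the entries of S_k depend only on i+j, i.e. (S_k)_{ij} = (S_k)_{i'j'} whenever i+j = i'+j' and all four indices lie in [k, n+1−k]. In other words, every symmetric matrix is a sum of ⌈n/2⌉ centrally-embedded Hankel matrices of successively smaller sizes n, n−2, n−4, …. -/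
/-!
Call `min (i, j, n-1-i, n-1-j)` the depth of the entry `(i, j)`: the central block of the
`k`-th summand consists of the entries of depth `≥ k`. On an antidiagonal `i + j = s` the
entries of a given depth form a pair `(i, j), (j, i)`, so a symmetric matrix has a
well-defined value `g k s` at depth `k` on antidiagonal `s`. The `k`-th summand is the
centrally embedded Hankel matrix with symbol `s ↦ g k s - g (k-1) s`; at `(i, j)` the sum
over the blocks containing it telescopes to `g (depth) (i + j) = S i j`.
-/

open Finset

variable {α : Type*} {n : ℕ}

def centralDepth (n i j : ℕ) : ℕ := min (min i j) (min (n - 1 - i) (n - 1 - j))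

theorem le_centralDepth_iff {i j k : ℕ} (hi : i < n) (hj : j < n) :
    k ≤ centralDepth n i j ↔ k ≤ i ∧ i + k + 1 ≤ n ∧ k ≤ j ∧ j + k + 1 ≤ n := by
  unfold centralDepth
  omega

theorem centralDepth_lt {i j : ℕ} (hi : i < n) : centralDepth n i j < (n + 1) / 2 := by
  unfold centralDepth
  omega

def centralHankel [Zero α] (n k : ℕ) (h : ℕ → α) : Matrix (Fin n) (Fin n) α :=
  Matrix.of fun i j => if k ≤ centralDepth n i j then h (i + j) else 0

namespace Matrix

def entryOfNat [Zero α] (S : Matrix (Fin n) (Fin n) α) (i j : ℕ) : α :=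
  if h : i < n ∧ j < n then S ⟨i, h.1⟩ ⟨j, h.2⟩ else 0

theorem entryOfNat_val [Zero α] (S : Matrix (Fin n) (Fin n) α) (i j : Fin n) :
    S.entryOfNat i j = S i j :=
  dif_pos ⟨i.isLt, j.isLt⟩

/-- The entry of depth `k` on the antidiagonal `s`, read at the point `(s - c, c)` with
`s - c ≤ c`. -/
def depthEntry [Zero α] (S : Matrix (Fin n) (Fin n) α) (k s : ℕ) : α :=
  S.entryOfNat (s - (min s (n - 1) - k)) (min s (n - 1) - k)

theorem IsSymm.depthEntry_centralDepth [Zero α] {S : Matrix (Fin n) (Fin n) α}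
    (hS : S.IsSymm) (i j : Fin n) : S.depthEntry (centralDepth n i j) (i + j) = S i j := by
  unfold depthEntry
  have hd : centralDepth n i j = min (min (i : ℕ) j) (min (n - 1 - i) (n - 1 - j)) := rfl
  rcases le_total (i : ℕ) j with hij | hji
  · have h₁ : (i + j : ℕ) - (min (i + j : ℕ) (n - 1) - centralDepth n i j) = i := by omega
    have h₂ : min (i + j : ℕ) (n - 1) - centralDepth n i j = j := by omega
    rw [h₁, h₂, entryOfNat_val]
  · have h₁ : (i + j : ℕ) - (min (i + j : ℕ) (n - 1) - centralDepth n i j) = j := by omega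
    have h₂ : min (i + j : ℕ) (n - 1) - centralDepth n i j = i := by omega
    rw [h₁, h₂, entryOfNat_val, hS.apply]

end Matrix

/-- Backward differences of `f`, with `f (-1) = 0`. -/
def backwardDiff [AddCommGroup α] (f : ℕ → α) : ℕ → α
  | 0 => f 0
  | k + 1 => f (k + 1) - f k

theorem sum_range_succ_backwardDiff [AddCommGroup α] (f : ℕ → α) (L : ℕ) :
    ∑ k ∈ range (L + 1), backwardDiff f k = f L := by
  induction L with
  | zero => simp [backwardDiff]
  | succ L ih => rw [sum_range_succ, ih, backwardDiff, add_sub_cancel]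

theorem sum_range_ite_le [AddCommMonoid α] (f : ℕ → α) {d m : ℕ} (hd : d < m) :
    ∑ k ∈ range m, (if k ≤ d then f k else 0) = ∑ k ∈ range (d + 1), f k := by
  rw [← sum_filter]
  congr 1
  ext k
  simp only [mem_filter, mem_range]
  omega

theorem Matrix.IsSymm.sum_centralHankel_backwardDiff [AddCommGroup α]
    {S : Matrix (Fin n) (Fin n) α} (hS : S.IsSymm) :
    ∑ k : Fin ((n + 1) / 2),
      centralHankel n k (fun s => backwardDiff (fun k => S.depthEntry k s) k) = S := by
  ext i j
  rw [Matrix.sum_apply]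
  simp only [centralHankel, Matrix.of_apply]
  rw [Fin.sum_univ_eq_sum_range (fun k =>
      if k ≤ centralDepth n i j then backwardDiff (fun k => S.depthEntry k (i + j)) k else 0),
    sum_range_ite_le _ (centralDepth_lt i.isLt), sum_range_succ_backwardDiff,
    hS.depthEntry_centralDepth]

theorem symmetric_is_sum_of_central_hankels_general (n : ℕ)
    (S : Matrix (Fin n) (Fin n) ℂ) (hS : S.IsSymm) :
    ∃ T : Fin ((n + 1) / 2) → Matrix (Fin n) (Fin n) ℂ,
      S = ∑ k, T k ∧
      (∀ (k : Fin ((n + 1) / 2)) (i j : Fin n),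
        ¬ (k.val ≤ i.val ∧ i.val + k.val + 1 ≤ n ∧ k.val ≤ j.val ∧ j.val + k.val + 1 ≤ n) →
        T k i j = 0) ∧
      (∀ (k : Fin ((n + 1) / 2)) (i j i' j' : Fin n),
        k.val ≤ i.val → i.val + k.val + 1 ≤ n →
        k.val ≤ j.val → j.val + k.val + 1 ≤ n →
        k.val ≤ i'.val → i'.val + k.val + 1 ≤ n →
        k.val ≤ j'.val → j'.val + k.val + 1 ≤ n →
        i.val + j.val = i'.val + j'.val → T k i j = T k i' j') := by
  refine ⟨fun k => centralHankel n k (fun s => backwardDiff (fun k => S.depthEntry k s) k),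
    hS.sum_centralHankel_backwardDiff.symm, ?_, ?_⟩
  · intro k i j hout
    exact if_neg ((le_centralDepth_iff i.isLt j.isLt).not.mpr hout)
  · intro k i j i' j' hi₁ hi₂ hj₁ hj₂ hi₁' hi₂' hj₁' hj₂' hs
    simp only [centralHankel, Matrix.of_apply]
    rw [if_pos ((le_centralDepth_iff i.isLt j.isLt).mpr ⟨hi₁, hi₂, hj₁, hj₂⟩),
      if_pos ((le_centralDepth_iff i'.isLt j'.isLt).mpr ⟨hi₁', hi₂', hj₁', hj₂'⟩), hs]

/-- every symmetric `n × n` complex matrix is a sum of `m = ⌈n/2⌉`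
centrally-embedded Hankel matrices of successively smaller sizes.  Indexing the
summands by `k : Fin ⌈n/2⌉` (0-based, corresponding to the 1-based `k+1`), the
`k`-th summand vanishes outside the central block `[k, n-1-k] × [k, n-1-k]`
(0-based), and on that block its entries depend only on `i + j`. -/
theorem symmetric_is_sum_of_central_hankels (n : ℕ) (hn : 1 ≤ n)
    (S : Matrix (Fin n) (Fin n) ℂ) (hS : S.IsSymm) :
    ∃ T : Fin ((n + 1) / 2) → Matrix (Fin n) (Fin n) ℂ,
      S = ∑ k, T k ∧
      (∀ (k : Fin ((n + 1) / 2)) (i j : Fin n),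
        ¬ (k.val ≤ i.val ∧ i.val + k.val + 1 ≤ n ∧ k.val ≤ j.val ∧ j.val + k.val + 1 ≤ n) →
        T k i j = 0) ∧
      (∀ (k : Fin ((n + 1) / 2)) (i j i' j' : Fin n),
        k.val ≤ i.val → i.val + k.val + 1 ≤ n →
        k.val ≤ j.val → j.val + k.val + 1 ≤ n →
        k.val ≤ i'.val → i'.val + k.val + 1 ≤ n →
        k.val ≤ j'.val → j'.val + k.val + 1 ≤ n →
        i.val + j.val = i'.val + j'.val → T k i j = T k i' j') :=
  symmetric_is_sum_of_central_hankels_general n S hS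
end

section
/- For every n ≥ 1, let N = n(n+1)/2. There exist linear functionals u_1,…,u_N : ℂ^N → ℂ, linear functionals ψ_1,…,ψ_N : ℂⁿ → ℂ, and vectors w_1,…,w_N ∈ ℂⁿ such that for every s ∈ ℂ^N and every v ∈ ℂⁿ, the symmetric matrix S represented by s satisfies S·v = Σ_{j=1}^{N} u_j(s)·ψ_j(v)·w_j. That is, the n×n symmetric matrix-vector product admits a bilinear algorithm of length n(n+1)/2. -/
def symOfUpper (n : ℕ) (s : {p : Fin n × Fin n // p.1 ≤ p.2} → ℂ) :
    Matrix (Fin n) (Fin n) ℂ :=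
  Matrix.of fun i j =>
    if h : i ≤ j then s ⟨(i, j), h⟩ else s ⟨(j, i), le_of_not_ge h⟩

/-! The `n(n+1)/2` rank-one matrices `e_a e_aᵀ` and `(e_a + e_b)(e_a + e_b)ᵀ` (`a < b`) span the
symmetric matrices:
`S = ∑_{a<b} S_ab (e_a + e_b)(e_a + e_b)ᵀ + ∑_a (S_aa - ∑_{b ≠ a} S_ab) e_a e_aᵀ`,
because the first sum has the off-diagonal entries of `S` and the second corrects its diagonal.
Applied to `v`, each term costs one multiplication:
`(e_a + e_b)(e_a + e_b)ᵀ v = (v_a + v_b) (e_a + e_b)`.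
-/

open Finset

namespace Finset

variable {α M : Type*} [AddCommMonoid M]

theorem sum_offDiag_eq_sum_sum_erase [DecidableEq α] (s : Finset α) (f : α × α → M) :
    ∑ p ∈ s.offDiag, f p = ∑ a ∈ s, ∑ b ∈ s.erase a, f (a, b) := by
  rw [sum_sigma']
  refine sum_nbij' (fun p => ⟨p.1, p.2⟩) (fun p => (p.1, p.2)) ?_ ?_ ?_ ?_ ?_ <;> aesop

theorem sum_offDiag_filter_lt_add_swap [LinearOrder α] (s : Finset α) (f : α → α → M) :
    ∑ p ∈ s.offDiag with p.1 < p.2, (f p.1 p.2 + f p.2 p.1) = ∑ p ∈ s.offDiag, f p.1 p.2 := by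
  have swap : ∑ p ∈ s.offDiag with p.1 < p.2, f p.2 p.1 =
      ∑ p ∈ s.offDiag with ¬ p.1 < p.2, f p.1 p.2 := by
    refine sum_nbij' Prod.swap Prod.swap ?_ ?_ ?_ ?_ ?_ <;> grind
  rw [sum_add_distrib, swap, sum_filter_add_sum_filter_not]

theorem sum_subtype_fst_le [Fintype α] [LinearOrder α] (f : α × α → M) :
    ∑ p : {p : α × α // p.1 ≤ p.2}, f p =
      ∑ a, f (a, a) + ∑ p ∈ univ.offDiag with p.1 < p.2, f p := by
  rw [← sum_subtype {p ∈ univ | p.1 ≤ p.2} (by simp), ← univ_product_univ, ← diag_union_offDiag,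
    filter_union, sum_union (disjoint_filter_filter (disjoint_diag_offDiag _)), ← sum_diag,
    offDiag_filter_lt_eq_filter_le]
  congr 2
  ext p
  simp +contextual [mem_diag]

end Finset

namespace Matrix.SymmetricMulVec

variable {α R : Type*} [Fintype α] [LinearOrder α] [Ring R]

def u (p : α × α) : Matrix α α R →ₗ[R] R :=
  if p.1 = p.2 then
    entryLinearMap R R p.1 p.1 - ∑ b ∈ univ.erase p.1, entryLinearMap R R p.1 b
  else entryLinearMap R R p.1 p.2

def ψ (p : α × α) : (α → R) →ₗ[R] R :=
  if p.1 = p.2 then .proj p.1 else .proj p.1 + .proj p.2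

def w (p : α × α) : α → R :=
  if p.1 = p.2 then Pi.single p.1 1 else Pi.single p.1 1 + Pi.single p.2 1

theorem _root_.Matrix.IsSymm.mulVec_eq_sum {S : Matrix α α R} (hS : S.IsSymm) (v : α → R) :
    S *ᵥ v = ∑ p : {p : α × α // p.1 ≤ p.2}, (u p.1 S * ψ p.1 v) • w p.1 := by
  set g : α → α → R := fun a b => S a b * (v a + v b)
  have diag (a : α) : (u (a, a) S * ψ (a, a) v) • w (a, a) =
      (Pi.single a ((S a a - ∑ b ∈ univ.erase a, S a b) * v a) : α → R) := by
    simp [u, ψ, w, ← Pi.single_smul, -sum_erase_eq_sub]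
  have offDiag {p : α × α} (hp : p ∈ univ.offDiag) : (u p S * ψ p v) • w p =
      (Pi.single p.1 (g p.1 p.2) + Pi.single p.2 (g p.2 p.1) : α → R) := by
    have hne : p.1 ≠ p.2 := (mem_offDiag.1 hp).2.2
    simp [u, ψ, w, hne, g, hS.apply, add_comm (v p.2), ← Pi.single_smul]
  have row (a : α) : (S a a - ∑ b ∈ univ.erase a, S a b) * v a + ∑ b ∈ univ.erase a, g a b =
      (S *ᵥ v) a := by
    simp only [g, sub_mul, mul_add, sum_add_distrib, ← sum_mul, mulVec, dotProduct,
      ← add_sum_erase univ (fun b => S a b * v b) (mem_univ a)]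
    abel
  have sum_single (a : α) (f : α → R) :
      ∑ b ∈ univ.erase a, (Pi.single a (f b) : α → R) = Pi.single a (∑ b ∈ univ.erase a, f b) :=
    (map_sum (AddMonoidHom.single (fun _ => R) a) f _).symm
  rw [sum_subtype_fst_le fun p => (u p S * ψ p v) • w p,
    sum_congr rfl fun p hp => offDiag (mem_filter.1 hp).1,
    sum_offDiag_filter_lt_add_swap (f := fun a b => (Pi.single a (g a b) : α → R)),
    sum_offDiag_eq_sum_sum_erase, ← sum_add_distrib]
  simp only [diag, sum_single, ← Pi.single_add, row]
  exact (univ_sum_single _).symm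

end Matrix.SymmetricMulVec

theorem Fintype.card_subtype_fst_le (α : Type*) [Fintype α] [LinearOrder α] :
    Fintype.card {p : α × α // p.1 ≤ p.2} = Fintype.card α * (Fintype.card α + 1) / 2 := by
  rw [← Fintype.card_congr Sym2.sortEquiv, Sym2.card, Nat.choose_two_right, Nat.add_sub_cancel,
    mul_comm]

theorem isSymm_symOfUpper (n : ℕ) (s : {p : Fin n × Fin n // p.1 ≤ p.2} → ℂ) :
    (symOfUpper n s).IsSymm :=
  Matrix.IsSymm.ext fun i j => by
    rcases lt_trichotomy i j with h | rfl | h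
    · simp [symOfUpper, h.le, h.not_ge]
    · rfl
    · simp [symOfUpper, h.le, h.not_ge]

def symOfUpperLinearMap (n : ℕ) :
    ({p : Fin n × Fin n // p.1 ≤ p.2} → ℂ) →ₗ[ℂ] Matrix (Fin n) (Fin n) ℂ where
  toFun := symOfUpper n
  map_add' s t := by ext i j; by_cases h : i ≤ j <;> simp [symOfUpper, h]
  map_smul' c s := by ext i j; by_cases h : i ≤ j <;> simp [symOfUpper, h]

theorem symmetric_bilinear_algorithm_length_general (n : ℕ) :
    ∃ u : Fin (n * (n + 1) / 2) → ({p : Fin n × Fin n // p.1 ≤ p.2} → ℂ) →ₗ[ℂ] ℂ,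
    ∃ ψ : Fin (n * (n + 1) / 2) → (Fin n → ℂ) →ₗ[ℂ] ℂ,
    ∃ w : Fin (n * (n + 1) / 2) → Fin n → ℂ,
      ∀ (s : {p : Fin n × Fin n // p.1 ≤ p.2} → ℂ) (v : Fin n → ℂ),
        (symOfUpper n s).mulVec v = ∑ j : Fin (n * (n + 1) / 2), (u j s * ψ j v) • w j := by
  obtain ⟨e⟩ : Nonempty (Fin (n * (n + 1) / 2) ≃ {p : Fin n × Fin n // p.1 ≤ p.2}) :=
    ⟨(Fintype.equivFinOfCardEq (by simpa using Fintype.card_subtype_fst_le (Fin n))).symm⟩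
  open Matrix.SymmetricMulVec in
  refine ⟨fun j => u (e j).1 ∘ₗ symOfUpperLinearMap n, fun j => ψ (e j).1, fun j => w (e j).1,
    fun s v => ?_⟩
  rw [(isSymm_symOfUpper n s).mulVec_eq_sum, ← e.sum_comp]
  rfl

/-- the `n × n` symmetric matrix-vector product admits a bilinear
algorithm of length `N = n(n+1)/2`. -/
theorem symmetric_bilinear_algorithm_length (n : ℕ) (hn : 1 ≤ n) :
    ∃ u : Fin (n * (n + 1) / 2) → ({p : Fin n × Fin n // p.1 ≤ p.2} → ℂ) →ₗ[ℂ] ℂ,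
    ∃ ψ : Fin (n * (n + 1) / 2) → (Fin n → ℂ) →ₗ[ℂ] ℂ,
    ∃ w : Fin (n * (n + 1) / 2) → Fin n → ℂ,
      ∀ (s : {p : Fin n × Fin n // p.1 ≤ p.2} → ℂ) (v : Fin n → ℂ),
        (symOfUpper n s).mulVec v = ∑ j : Fin (n * (n + 1) / 2), (u j s * ψ j v) • w j :=
  symmetric_bilinear_algorithm_length_general n
end

section
/- Let n ≥ 1 and let S ⊆ {1,…,n} × {1,…,n} be a set of matrix positions, and let X_S be the linear space of n×n complex matrices A with A_{ij} = 0 for all (i,j) ∉ S. Every bilinear algorithm for the matrix-vector product on X_S has length at least #S: if u_1,…,u_r : X_S → ℂ and ψ_1,…,ψ_r : ℂⁿ → ℂ are linear functionals and w_1,…,w_r ∈ ℂⁿ are vectors with A·v = Σ_{j=1}^{r} u_j(A)·ψ_j(v)·w_j for all A ∈ X_S and v ∈ ℂⁿ, then r ≥ #S. Hence the bilinear complexity of the sparse matrix-vector product is exactly #S. -/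
/-!
If every `u j` vanishes on a matrix `A` supported on `S`, the bilinear identity gives `A v = 0`
for all `v`, so `A = 0`. Hence `A ↦ (u j A)_j` is injective on the `#S`-dimensional space of
matrices supported on `S`, and so `#S ≤ r`.
-/

open Submodule

namespace Matrix

variable {m n ι R : Type*}

def supportedOn (R : Type*) [Semiring R] (S : Set (m × n)) : Submodule R (Matrix m n R) where
  carrier := {A | ∀ p ∉ S, A p.1 p.2 = 0}
  add_mem' hA hB p hp := by simp [hA p hp, hB p hp]
  zero_mem' _ _ := rfl
  smul_mem' c A hA p hp := by simp [hA p hp]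

theorem span_single_le_supportedOn [Semiring R] [DecidableEq m] [DecidableEq n]
    (S : Set (m × n)) :
    span R (Set.range fun p : S => single p.1.1 p.1.2 (1 : R)) ≤ supportedOn R S := by
  rw [span_le]
  rintro _ ⟨⟨q, hq⟩, rfl⟩ p hp
  have : q ≠ p := by rintro rfl; exact hp hq
  simp [Prod.ext_iff.not.mp this]

theorem linearIndependent_single_one [Ring R] [Fintype m] [Finite n] [DecidableEq m]
    [DecidableEq n] (S : Set (m × n)) :
    LinearIndependent R fun p : S => single p.1.1 p.1.2 (1 : R) := by
  convert (stdBasis R m n).linearIndependent.comp _ Subtype.val_injective using 1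
  funext p
  exact (stdBasis_eq_single R p.1.1 p.1.2).symm

theorem card_le_of_disjoint_supportedOn_ker [Ring R] [StrongRankCondition R] [Fintype m]
    [Fintype n] [DecidableEq m] [DecidableEq n] [Fintype ι] (S : Finset (m × n))
    {f : Matrix m n R →ₗ[R] ι → R} (hf : Disjoint (supportedOn R (S : Set (m × n))) f.ker) :
    S.card ≤ Fintype.card ι := by
  have hli := (linearIndependent_single_one (R := R) (S : Set (m × n))).map
    (hf.mono_left (span_single_le_supportedOn _))
  simpa using hli.fintype_card_le_finrank

theorem disjoint_supportedOn_ker_pi [Semiring R] [Fintype n] [DecidableEq n] [Fintype ι]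
    (S : Set (m × n)) (u : ι → Matrix m n R →ₗ[R] R) (ψ : ι → (n → R) → R) (w : ι → m → R)
    (h : ∀ A ∈ supportedOn R S, ∀ v, A *ᵥ v = ∑ j, (u j A * ψ j v) • w j) :
    Disjoint (supportedOn R S) (LinearMap.pi u).ker := by
  rw [disjoint_def]
  intro A hA hker
  have hu : ∀ j, u j A = 0 := fun j => congrFun hker j
  ext i k
  simpa [hu, mulVec_single_one] using congrFun (h A hA (Pi.single k 1)) i

end Matrix

theorem sparse_bilinear_algorithm_lower_bound_general (n : ℕ)
    (S : Finset (Fin n × Fin n)) (r : ℕ)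
    (u : Fin r → Matrix (Fin n) (Fin n) ℂ →ₗ[ℂ] ℂ)
    (ψ : Fin r → (Fin n → ℂ) →ₗ[ℂ] ℂ)
    (w : Fin r → Fin n → ℂ)
    (h : ∀ A : Matrix (Fin n) (Fin n) ℂ,
      (∀ p : Fin n × Fin n, p ∉ S → A p.1 p.2 = 0) →
      ∀ v : Fin n → ℂ,
        A.mulVec v = ∑ j : Fin r, (u j A * ψ j v) • w j) :
    S.card ≤ r := by
  have hinj := Matrix.disjoint_supportedOn_ker_pi (S : Set (Fin n × Fin n)) u (fun j => ψ j) w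
    fun A hA => h A hA
  simpa using Matrix.card_le_of_disjoint_supportedOn_ker S hinj

/-- for any sparsity support `S`, every bilinear algorithm for the
matrix-vector product on `n × n` matrices supported on `S` has length at least
`#S`; hence the bilinear complexity of the sparse matrix-vector product is
exactly `#S`. -/
theorem sparse_bilinear_algorithm_lower_bound (n : ℕ) (hn : 1 ≤ n)
    (S : Finset (Fin n × Fin n)) (r : ℕ)
    (u : Fin r → Matrix (Fin n) (Fin n) ℂ →ₗ[ℂ] ℂ)
    (ψ : Fin r → (Fin n → ℂ) →ₗ[ℂ] ℂ)
    (w : Fin r → Fin n → ℂ)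
    (h : ∀ A : Matrix (Fin n) (Fin n) ℂ,
      (∀ p : Fin n × Fin n, p ∉ S → A p.1 p.2 = 0) →
      ∀ v : Fin n → ℂ,
        A.mulVec v = ∑ j : Fin r, (u j A * ψ j v) • w j) :
    S.card ≤ r :=
  sparse_bilinear_algorithm_lower_bound_general n S r u ψ w h
end

section
/- Let n, m ≥ 1. (Upper bound) There exist linear functionals u_1,…,u_{nm} : ℂⁿ × ℂ^m → ℂ of the product form u_l(a,b) = φ_l(a)·χ_l(b) with φ_l, χ_l linear, linear functionals ψ_1,…,ψ_{nm} : ℂ^{nm} → ℂ, and vectors w_1,…,w_{nm} ∈ ℂ^{nm} such that for every a ∈ ℂⁿ, b ∈ ℂ^m, and v ∈ ℂ^{nm}, (A ⊗ B)·v = Σ_{l=1}^{nm} φ_l(a)·χ_l(b)·ψ_l(v)·w_l, where A is the n×n circulant matrix with first row a and B is the m×m circulant matrix with first row b. (Lower bound) Moreover, every bilinear algorithm computing (A ⊗ B)·v from linear functionals of the pair (a,b) and of v has length at least nm. Hence the bilinear complexity of the two-level circulant (BCCB) matrix-vector product is exactly nm. -/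
/-!
Over the finite abelian group `G = ℤ/n × ℤ/m`, the BCCB matrix with first rows `a`, `b` acts as
the group circulant `v ↦ (i ↦ ∑ s, c (s - i) * v s)` with `c (p, q) = a p * b q`, so the `n·m`
characters of `G` diagonalize it: each eigenvalue is a Fourier coefficient of `c`, which splits
as a product of one of `a` and one of `b`. Conversely, taking `a` and `b` to be the first rows
of identity matrices turns any bilinear algorithm into a spanning family of `ℂ^{nm}` made of its
vectors `w_j`, so it has at least `n·m` of them.
-/

open Kronecker

/-- The `n × n` circulant matrix with first row `a`: `A i j = a ((j - i) mod n)`. -/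
def circulantMat (n : ℕ) (a : Fin n → ℂ) : Matrix (Fin n) (Fin n) ℂ :=
  Matrix.of fun i j => a (j - i)

open Finset Matrix

section Fourier

variable {G H : Type*} [AddCommGroup G] [Fintype G] [AddCommGroup H] [Fintype H]

theorem sum_sub_mul_eq_sum_addChar [DecidableEq G] (c v : G → ℂ) (i : G) :
    ∑ s, c (s - i) * v s =
      ∑ ψ : AddChar G ℂ,
        (∑ p, c p * ψ p) * (∑ s, v s * ψ (-s)) * ((Fintype.card G : ℂ)⁻¹ * ψ i) := by
  have hG : (Fintype.card G : ℂ) ≠ 0 := Nat.cast_ne_zero.2 Fintype.card_ne_zero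
  have hzero (p s : G) : p - s + i = 0 ↔ p = s - i := by
    rw [sub_add_eq_add_sub, sub_eq_zero, eq_sub_iff_add_eq]
  calc ∑ s, c (s - i) * v s
      = ∑ s, ∑ p, (Fintype.card G : ℂ)⁻¹ * (c p * v s * ∑ ψ : AddChar G ℂ, ψ (p - s + i)) := by
        simp only [AddChar.sum_apply_eq_ite, hzero, mul_ite, mul_zero, Fintype.sum_ite_eq']
        exact sum_congr rfl fun s _ => by field_simp
    _ = ∑ ψ : AddChar G ℂ, ∑ s, ∑ p, (Fintype.card G : ℂ)⁻¹ * (c p * v s * ψ (p - s + i)) := by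
        simp only [mul_sum]
        exact (sum_congr rfl fun s _ => sum_comm).trans sum_comm
    _ = _ := by
        simp only [sum_mul, mul_sum]
        refine sum_congr rfl fun ψ _ => sum_congr rfl fun p _ => sum_congr rfl fun s _ => ?_
        rw [sub_eq_add_neg, AddChar.map_add_eq_mul, AddChar.map_add_eq_mul]
        ring

theorem sum_mul_mul_addChar_prod (a : G → ℂ) (b : H → ℂ) (ψ : AddChar (G × H) ℂ) :
    ∑ pq : G × H, a pq.1 * b pq.2 * ψ pq = (∑ p, a p * ψ (p, 0)) * ∑ q, b q * ψ (0, q) := by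
  have hψ (p : G) (q : H) : ψ (p, q) = ψ (p, 0) * ψ (0, q) := by
    rw [← AddChar.map_add_eq_mul, Prod.mk_add_mk, add_zero, zero_add]
  rw [Fintype.sum_prod_type, sum_mul_sum]
  exact sum_congr rfl fun p _ => sum_congr rfl fun q _ => by rw [hψ]; ring

end Fourier

theorem circulantMat_single_zero_one (n : ℕ) [NeZero n] :
    circulantMat n (Pi.single 0 1) = 1 := by
  ext i j
  simp [circulantMat, one_apply, Pi.single_apply, sub_eq_zero, eq_comm]

theorem kronecker_circulantMat_mulVec_apply {n m : ℕ} [NeZero n] [NeZero m]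
    (a : Fin n → ℂ) (b : Fin m → ℂ) (v : Fin n × Fin m → ℂ) (ij : Fin n × Fin m) :
    (circulantMat n a ⊗ₖ circulantMat m b *ᵥ v) ij =
      ∑ st, (fun pq : Fin n × Fin m => a pq.1 * b pq.2) (st - ij) * v st := by
  simp [mulVec, dotProduct, circulantMat, mul_assoc]

theorem card_le_of_forall_exists_eq_sum_smul {K ι κ : Type*} [Field K] [Fintype ι] [Fintype κ]
    (w : κ → ι → K) (h : ∀ v : ι → K, ∃ c : κ → K, ∑ j, c j • w j = v) :
    Fintype.card ι ≤ Fintype.card κ := by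
  have hspan : Submodule.span K (Set.range w) = ⊤ :=
    Submodule.eq_top_iff'.2 fun v => (Submodule.mem_span_range_iff_exists_fun K).2 (h v)
  simpa using finrank_le_of_span_eq_top hspan

/-- the two-level circulant (BCCB) matrix-vector product has bilinear
complexity exactly `n·m`.  Upper bound: there is a bilinear algorithm of length
`n·m` whose matrix functionals have the product form `u_l(a,b) = φ_l(a)·χ_l(b)`.
Lower bound: every bilinear algorithm whose matrix functionals are linear in the
BCCB matrix (equivalently, in its parameters) has length at least `n·m`. -/
theorem bccb_bilinear_complexity (n m : ℕ) (hn : 1 ≤ n) (hm : 1 ≤ m) :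
    (∃ φ : Fin (n * m) → (Fin n → ℂ) →ₗ[ℂ] ℂ,
     ∃ χ : Fin (n * m) → (Fin m → ℂ) →ₗ[ℂ] ℂ,
     ∃ ψ : Fin (n * m) → (Fin n × Fin m → ℂ) →ₗ[ℂ] ℂ,
     ∃ w : Fin (n * m) → Fin n × Fin m → ℂ,
      ∀ (a : Fin n → ℂ) (b : Fin m → ℂ) (v : Fin n × Fin m → ℂ),
        ((circulantMat n a) ⊗ₖ (circulantMat m b)).mulVec v
          = ∑ l : Fin (n * m), (φ l a * χ l b * ψ l v) • w l) ∧
    (∀ (r : ℕ)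
       (u : Fin r → Matrix (Fin n × Fin m) (Fin n × Fin m) ℂ →ₗ[ℂ] ℂ)
       (ψ : Fin r → (Fin n × Fin m → ℂ) →ₗ[ℂ] ℂ)
       (w : Fin r → Fin n × Fin m → ℂ),
      (∀ (a : Fin n → ℂ) (b : Fin m → ℂ) (v : Fin n × Fin m → ℂ),
        ((circulantMat n a) ⊗ₖ (circulantMat m b)).mulVec v
          = ∑ j : Fin r, (u j ((circulantMat n a) ⊗ₖ (circulantMat m b)) * ψ j v) • w j) →
      n * m ≤ r) := by
  have : NeZero n := ⟨by omega⟩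
  have : NeZero m := ⟨by omega⟩
  constructor
  · obtain ⟨e⟩ : Nonempty (Fin (n * m) ≃ AddChar (Fin n × Fin m) ℂ) :=
      Fintype.card_eq.1 (by simp)
    refine ⟨fun l => Fintype.linearCombination ℂ fun p => e l (p, 0),
      fun l => Fintype.linearCombination ℂ fun q => e l (0, q),
      fun l => Fintype.linearCombination ℂ fun s => e l (-s),
      fun l ij => ((n * m : ℕ) : ℂ)⁻¹ * e l ij, fun a b v => funext fun ij => ?_⟩
    rw [kronecker_circulantMat_mulVec_apply,
      sum_sub_mul_eq_sum_addChar (fun pq : Fin n × Fin m => a pq.1 * b pq.2), ← e.sum_comp]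
    simp [Fintype.linearCombination_apply, sum_mul_mul_addChar_prod]
  · intro r u ψ w hAlg
    have hId := hAlg (Pi.single 0 1) (Pi.single 0 1)
    simp only [circulantMat_single_zero_one, one_kronecker_one, one_mulVec] at hId
    simpa using card_le_of_forall_exists_eq_sum_smul w fun v => ⟨_, (hId v).symm⟩
end
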